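/- Let t < 0. The function x_t^+ is strictly decreasing on [0, y_t] and maps (0, y_t) onto the interval (−1/2 + 0·…, x_t^+(0)) = (−1/2, −1/2 + √(1/4 − 1/t)); the function x_t^− is strictly increasing on [0, y_t] and maps (0, y_t) onto (x_t^−(0), −1/2) = (−1/2 − √(1/4 − 1/t), −1/2). Moreover x_t^±(y_t) = −1/2. -/

import Mathlib

open Real Set Filter Topology

/-- For `t < 0`, `f_t(y) := 2y·sin(ty) + cos(ty)`. -/
noncomputable def fMap (t y : ℝ) : ℝ :=
  2 * y * Real.sin (t * y) + Real.cos (t * y)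

/-- `v_t(y) := √(1/4 − y² − y·cot(ty))` for `y ≠ 0` and `v_t(0) := √(1/4 − 1/t)`. -/
noncomputable def vMap (t y : ℝ) : ℝ :=
  if y = 0 then Real.sqrt (1 / 4 - 1 / t)
  else Real.sqrt (1 / 4 - y ^ 2 - y * Real.cot (t * y))

/-- `x_t^+(y) := −1/2 + v_t(y)`. -/
noncomputable def xPlus (t y : ℝ) : ℝ := -1 / 2 + vMap t y

/-- `x_t^−(y) := −1/2 − v_t(y)`. -/
noncomputable def xMinus (t y : ℝ) : ℝ := -1 / 2 - vMap t y

namespace Stmt11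

/-- The half-angle auxiliary function. -/
noncomputable def H (t y : ℝ) : ℝ := 2 * y * Real.sin (t * y / 2) + Real.cos (t * y / 2)

/-- The radicand. -/
noncomputable def g (t y : ℝ) : ℝ := 1 / 4 - y ^ 2 - y * Real.cot (t * y)

lemma contH (t : ℝ) : Continuous (H t) := by
  unfold H; fun_prop

lemma fMap_add_one (t y : ℝ) :
    fMap t y + 1 = 2 * Real.cos (t * y / 2) * H t y := by
  unfold fMap H
  rw [show t * y = 2 * (t * y / 2) by ring, Real.sin_two_mul, Real.cos_two_mul]
  ring

/-- For `0 < x < π`, `x * cos x ≤ sin x`. -/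
lemma mul_cos_le_sin {x : ℝ} (h0 : 0 < x) (hπ : x < π) : x * Real.cos x ≤ Real.sin x := by
  rcases lt_or_ge x (π / 2) with h | h
  · have hc : 0 < Real.cos x := Real.cos_pos_of_mem_Ioo ⟨by linarith, h⟩
    have := Real.lt_tan h0 h
    rw [Real.tan_eq_sin_div_cos, lt_div_iff₀ hc] at this
    linarith
  · have hc : Real.cos x ≤ 0 := Real.cos_nonpos_of_pi_div_two_le_of_le h (by linarith)
    have hs : 0 < Real.sin x := Real.sin_pos_of_pos_of_lt_pi h0 hπ
    nlinarith

/-- For `u < 0`, `u < sin u * cos u`. -/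
lemma lt_sin_mul_cos {u : ℝ} (hu : u < 0) : u < Real.sin u * Real.cos u := by
  have h := Real.sin_lt (show (0:ℝ) < -(2*u) by linarith)
  rw [Real.sin_neg] at h
  have h2 : 2 * u < Real.sin (2 * u) := by linarith
  rw [Real.sin_two_mul] at h2
  nlinarith

end Stmt11

open Stmt11

set_option maxHeartbeats 1600000 in
/-- let `t < 0`. Then `x_t^+` is strictly decreasing on `[0, y_t]` and maps
`(0, y_t)` onto `(−1/2, −1/2 + √(1/4 − 1/t))`; `x_t^−` is strictly increasing on
`[0, y_t]` and maps `(0, y_t)` onto `(−1/2 − √(1/4 − 1/t), −1/2)`. Moreover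
`x_t^±(y_t) = −1/2`. -/
theorem xPlus_xMinus_monotone (t yt : ℝ) (ht : t < 0)
    (hyt : IsLeast {y : ℝ | 0 < y ∧ fMap t y = -1} yt) :
    StrictAntiOn (xPlus t) (Set.Icc 0 yt) ∧
    xPlus t '' Set.Ioo 0 yt =
      Set.Ioo (-1 / 2 : ℝ) (-1 / 2 + Real.sqrt (1 / 4 - 1 / t)) ∧
    StrictMonoOn (xMinus t) (Set.Icc 0 yt) ∧
    xMinus t '' Set.Ioo 0 yt =
      Set.Ioo (-1 / 2 - Real.sqrt (1 / 4 - 1 / t)) (-1 / 2 : ℝ) ∧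
    xPlus t yt = -1 / 2 ∧ xMinus t yt = -1 / 2 := by
  obtain ⟨⟨hyt0, hfyt⟩, hmin⟩ := hyt
  have ht' : (0:ℝ) < -t := neg_pos.2 ht
  have htne : t ≠ 0 := ne_of_lt ht
  set a : ℝ := π / (-t) with ha_def
  have ha : 0 < a := div_pos Real.pi_pos ht'
  have hta : t * a = -π := by
    rw [ha_def]; field_simp
  -- yt < a
  have hH0 : H t 0 = 1 := by simp [H]
  have hHa : H t a = -(2*a) := by
    unfold H
    rw [show t * a / 2 = -(π/2) by rw [hta]; ring]
    simp
  have hlt : yt < a := by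
    have h0 : (0:ℝ) ∈ Ioo (H t a) (H t 0) := by
      rw [hH0, hHa]; constructor <;> [linarith; norm_num]
    obtain ⟨y₀, hy₀, hHy₀⟩ :=
      intermediate_value_Ioo' (le_of_lt ha) (contH t).continuousOn h0
    have hf0 : fMap t y₀ = -1 := by
      have := fMap_add_one t y₀
      rw [hHy₀] at this; linarith
    exact lt_of_le_of_lt (hmin ⟨hy₀.1, hf0⟩) hy₀.2
  -- basic range facts
  have hrange : ∀ y ∈ Ioc (0:ℝ) yt, -π < t * y ∧ t * y < 0 := by
    intro y hy
    constructor
    · have : y < a := lt_of_le_of_lt hy.2 hlt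
      nlinarith [hy.1]
    · exact mul_neg_of_neg_of_pos ht hy.1
  have hsin_neg : ∀ y ∈ Ioc (0:ℝ) yt, Real.sin (t * y) < 0 := fun y hy =>
    Real.sin_neg_of_neg_of_neg_pi_lt (hrange y hy).2 (hrange y hy).1
  have hsinh_neg : ∀ y ∈ Ioc (0:ℝ) yt, Real.sin (t * y / 2) < 0 := fun y hy =>
    Real.sin_neg_of_neg_of_neg_pi_lt (by linarith [(hrange y hy).2, Real.pi_pos])
      (by linarith [(hrange y hy).1, Real.pi_pos])
  have hcosh_pos : ∀ y ∈ Icc (0:ℝ) yt, 0 < Real.cos (t * y / 2) := by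
    intro y hy
    rcases eq_or_lt_of_le hy.1 with h0 | h0
    · rw [← h0]; norm_num
    · exact Real.cos_pos_of_mem_Ioo ⟨by linarith [(hrange y ⟨h0, hy.2⟩).1],
        by linarith [(hrange y ⟨h0, hy.2⟩).2, Real.pi_pos]⟩
  -- H at yt and H positive before yt
  have hHyt : H t yt = 0 := by
    have h1 := fMap_add_one t yt
    rw [hfyt] at h1
    have h2 := hcosh_pos yt ⟨le_of_lt hyt0, le_refl _⟩
    have : 2 * Real.cos (t * yt / 2) * H t yt = 0 := by linarith
    rcases mul_eq_zero.mp this with h | h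
    · exfalso; nlinarith
    · exact h
  have hfH : ∀ y, H t y = 0 → fMap t y = -1 := by
    intro y h
    have := fMap_add_one t y
    rw [h] at this; linarith
  have hHpos : ∀ y ∈ Ico (0:ℝ) yt, 0 < H t y := by
    intro y hy
    by_contra hcon
    push_neg at hcon
    rcases eq_or_lt_of_le hcon with heq | hlt'
    · -- H t y = 0
      have hy0 : 0 < y := by
        rcases eq_or_lt_of_le hy.1 with h0 | h0
        · exfalso; rw [← h0] at heq; rw [hH0] at heq; norm_num at heq
        · exact h0
      exact absurd (hmin ⟨hy0, hfH y heq⟩) (not_le.2 hy.2)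
    · -- H t y < 0
      have h0 : (0:ℝ) ∈ Ioo (H t y) (H t 0) := by rw [hH0]; exact ⟨hlt', by norm_num⟩
      obtain ⟨z, hz, hHz⟩ :=
        intermediate_value_Ioo' hy.1 (contH t).continuousOn h0
      have := hmin ⟨hz.1, hfH z hHz⟩
      linarith [hz.2, hy.2]
  -- key identity for g
  have hgid : ∀ y ∈ Ioc (0:ℝ) yt,
      g t y = H t y * (Real.sin (t*y/2) - 2*y*Real.cos (t*y/2)) /
        (4 * Real.sin (t*y/2) * Real.cos (t*y/2)) := by
    intro y hy
    have hs := hsinh_neg y hy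
    have hc := hcosh_pos y ⟨le_of_lt hy.1, hy.2⟩
    unfold g H
    rw [Real.cot_eq_cos_div_sin,
      show t * y = 2 * (t * y / 2) by ring, Real.sin_two_mul, Real.cos_two_mul]
    have h1 : Real.sin (t*y/2) ≠ 0 := ne_of_lt hs
    have h2 : Real.cos (t*y/2) ≠ 0 := ne_of_gt hc
    have hpyth := Real.sin_sq_add_cos_sq (t*y/2)
    rw [show 2 * (t*y/2) / 2 = t*y/2 by ring]
    generalize Real.sin (t*y/2) = S at h1 hpyth ⊢
    generalize Real.cos (t*y/2) = C at h2 hpyth ⊢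
    field_simp
    linear_combination (-4*y) * hpyth
  have hgyt : g t yt = 0 := by
    rw [hgid yt ⟨hyt0, le_refl _⟩, hHyt]; simp
  have hgpos : ∀ y ∈ Ioo (0:ℝ) yt, 0 < g t y := by
    intro y hy
    have hy' : y ∈ Ioc (0:ℝ) yt := ⟨hy.1, le_of_lt hy.2⟩
    rw [hgid y hy']
    have hs := hsinh_neg y hy'
    have hc := hcosh_pos y ⟨le_of_lt hy.1, hy'.2⟩
    have hH := hHpos y ⟨le_of_lt hy.1, hy.2⟩
    apply div_pos_of_neg_of_neg
    · apply mul_neg_of_pos_of_neg hH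
      nlinarith [hy.1, mul_pos hy.1 hc]
    · nlinarith [mul_neg_of_neg_of_pos hs hc]
  -- derivative of g
  have hderiv : ∀ y ∈ Ioc (0:ℝ) yt, HasDerivAt (g t)
      (-(2*y) + (t*y - Real.sin (t*y) * Real.cos (t*y)) / Real.sin (t*y)^2) y := by
    intro y hy
    have hsne : Real.sin (t*y) ≠ 0 := ne_of_lt (hsin_neg y hy)
    have hlin : HasDerivAt (fun z : ℝ => t * z) t y := by
      simpa using (hasDerivAt_id y).const_mul t
    have hcot : HasDerivAt Real.cot
        (((-Real.sin (t*y)) * Real.sin (t*y) - Real.cos (t*y) * Real.cos (t*y)) /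
          Real.sin (t*y)^2) (t*y) := by
      have heq : Real.cot = fun u => Real.cos u / Real.sin u :=
        funext fun u => Real.cot_eq_cos_div_sin u
      rw [heq]
      exact (Real.hasDerivAt_cos (t*y)).div (Real.hasDerivAt_sin (t*y)) hsne
    have hcomp := hcot.comp y hlin
    have hmul := (hasDerivAt_id y).mul hcomp
    have hfull := ((hasDerivAt_const y (1/4:ℝ)).sub (hasDerivAt_pow 2 y)).sub hmul
    refine hfull.congr_deriv ?_; symm
    have hpy := Real.sin_sq_add_cos_sq (t*y)
    simp only [Function.comp_apply, id_eq, Real.cot_eq_cos_div_sin]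
    generalize Real.sin (t*y) = S at hsne hpy ⊢
    generalize Real.cos (t*y) = C at hpy ⊢
    field_simp
    linear_combination (-(t*y)) * hpy
  have hderiv_neg : ∀ y ∈ Ioo (0:ℝ) yt,
      (-(2*y) + (t*y - Real.sin (t*y) * Real.cos (t*y)) / Real.sin (t*y)^2) < 0 := by
    intro y hy
    have hy' : y ∈ Ioc (0:ℝ) yt := ⟨hy.1, le_of_lt hy.2⟩
    have hs := hsin_neg y hy'
    have hnum : t*y - Real.sin (t*y) * Real.cos (t*y) < 0 := by
      have := lt_sin_mul_cos (show t*y < 0 from (hrange y hy').2)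
      linarith
    have : (t*y - Real.sin (t*y) * Real.cos (t*y)) / Real.sin (t*y)^2 < 0 :=
      div_neg_of_neg_of_pos hnum (pow_two_pos_of_ne_zero (ne_of_lt hs))
    linarith [hy.1]
  have hcontg : ContinuousOn (g t) (Ioc 0 yt) := fun y hy =>
    (hderiv y hy).continuousAt.continuousWithinAt
  have hganti : StrictAntiOn (g t) (Ioc 0 yt) := by
    apply strictAntiOn_of_deriv_neg (convex_Ioc 0 yt) hcontg
    intro y hy
    rw [interior_Ioc] at hy
    rw [(hderiv y ⟨hy.1, le_of_lt hy.2⟩).deriv]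
    exact hderiv_neg y hy
  -- g < 1/4 - 1/t on Ioc 0 yt
  have hg0 : ∀ y ∈ Ioc (0:ℝ) yt, g t y < 1/4 - 1/t := by
    intro y hy
    have hu1 := (hrange y hy).1
    have hu2 := (hrange y hy).2
    have hs := hsin_neg y hy
    -- u * cos u ≥ sin u for u = t*y
    have hkey : Real.sin (t*y) ≤ (t*y) * Real.cos (t*y) := by
      have h := mul_cos_le_sin (show (0:ℝ) < -(t*y) by linarith) (by linarith)
      rw [Real.cos_neg, Real.sin_neg] at h
      linarith
    -- y * cot(t*y) ≥ 1/t
    have hcot : 1/t ≤ y * Real.cot (t*y) := by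
      rw [Real.cot_eq_cos_div_sin]
      have heq : y * (Real.cos (t*y) / Real.sin (t*y)) - 1/t =
          ((t*y) * Real.cos (t*y) - Real.sin (t*y)) / (t * Real.sin (t*y)) := by
        have hsne2 : Real.sin (y * t) ≠ 0 := by rw [mul_comm]; exact ne_of_lt hs
        rw [eq_div_iff (ne_of_gt (mul_pos_of_neg_of_neg ht hs))]
        field_simp [hsne2]
      have hpos : 0 < t * Real.sin (t*y) := mul_pos_of_neg_of_neg ht hs
      have : 0 ≤ y * (Real.cos (t*y) / Real.sin (t*y)) - 1/t := by
        rw [heq]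
        exact div_nonneg (by linarith) (le_of_lt hpos)
      linarith
    have hy2 : 0 < y^2 := pow_pos hy.1 2
    unfold g
    linarith
  -- the combined radicand function G
  set G : ℝ → ℝ := fun y => if y = 0 then 1/4 - 1/t else g t y with hG_def
  have hvG : ∀ y, vMap t y = Real.sqrt (G y) := by
    intro y
    unfold vMap
    by_cases h : y = 0 <;> simp [hG_def, g, h]
  have hG0 : G 0 = 1/4 - 1/t := by simp [hG_def]
  have hGpos0 : (0:ℝ) < 1/4 - 1/t := by
    have : 1/t < 0 := div_neg_of_pos_of_neg one_pos ht
    linarith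
  have hGanti : StrictAntiOn G (Icc 0 yt) := by
    intro x hx y hy hxy
    have hyne : y ≠ 0 := ne_of_gt (lt_of_le_of_lt hx.1 hxy)
    have hyIoc : y ∈ Ioc (0:ℝ) yt := ⟨lt_of_le_of_lt hx.1 hxy, hy.2⟩
    rcases eq_or_lt_of_le hx.1 with h0 | h0
    · rw [hG_def]
      simp only [← h0, if_pos rfl, if_neg hyne]
      exact hg0 y hyIoc
    · have hxne : x ≠ 0 := ne_of_gt h0
      rw [hG_def]
      simp only [if_neg hxne, if_neg hyne]
      exact hganti ⟨h0, hx.2⟩ hyIoc hxy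
  have hGnonneg : ∀ y ∈ Icc (0:ℝ) yt, 0 ≤ G y := by
    intro y hy
    by_cases h : y = 0
    · rw [h, hG0]; linarith
    · have hyIoc : y ∈ Ioc (0:ℝ) yt := ⟨lt_of_le_of_ne hy.1 (Ne.symm h), hy.2⟩
      rw [hG_def]; simp only [if_neg h]
      rcases eq_or_lt_of_le hyIoc.2 with heq | hlt'
      · rw [heq, hgyt]
      · exact le_of_lt (hgpos y ⟨hyIoc.1, hlt'⟩)
  have hGyt : G yt = 0 := by
    rw [hG_def]; simp only [if_neg (ne_of_gt hyt0)]; exact hgyt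
  -- vMap strict anti
  have hvanti : StrictAntiOn (vMap t) (Icc 0 yt) := by
    intro x hx y hy hxy
    rw [hvG, hvG]
    exact Real.sqrt_lt_sqrt (hGnonneg y hy) (hGanti hx hy hxy)
  -- continuity of G on Icc 0 yt
  have hGcont : ContinuousOn G (Icc 0 yt) := by
    intro y hy
    by_cases h : y = 0
    · -- continuity at 0 within
      subst h
      have hL : Tendsto G (𝓝[Ioi (0:ℝ)] 0) (𝓝 (1/4 - 1/t)) := by
        have hslope : Tendsto (fun x : ℝ => Real.sin x / x) (𝓝[≠] (0:ℝ)) (𝓝 1) := by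
          have h1 := hasDerivAt_iff_tendsto_slope.mp (Real.hasDerivAt_sin 0)
          rw [Real.cos_zero] at h1
          refine h1.congr' ?_
          filter_upwards [self_mem_nhdsWithin] with x hx
          simp [slope_def_field, Real.sin_zero]
        have hinv : Tendsto (fun x : ℝ => x / Real.sin x) (𝓝[≠] (0:ℝ)) (𝓝 1) := by
          have := hslope.inv₀ one_ne_zero
          rw [inv_one] at this
          refine this.congr fun x => ?_
          rw [inv_div]
        have hty : Tendsto (fun y : ℝ => t * y) (𝓝[>] (0:ℝ)) (𝓝[≠] (0:ℝ)) := by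
          apply tendsto_nhdsWithin_of_tendsto_nhds_of_eventually_within
          · have : Tendsto (fun y : ℝ => t * y) (𝓝 (0:ℝ)) (𝓝 (t * 0)) :=
              (continuous_const.mul continuous_id).tendsto 0
            rw [mul_zero] at this
            exact this.mono_left nhdsWithin_le_nhds
          · filter_upwards [self_mem_nhdsWithin] with x hx
            exact mul_ne_zero htne (ne_of_gt hx)
        have hcomp : Tendsto (fun y : ℝ => (t*y) / Real.sin (t*y)) (𝓝[>] (0:ℝ)) (𝓝 1) :=
          hinv.comp hty
        have hycot : Tendsto (fun y : ℝ => y * Real.cot (t*y)) (𝓝[>] (0:ℝ)) (𝓝 (1/t)) := by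
          have hcos : Tendsto (fun y : ℝ => Real.cos (t*y)) (𝓝[>] (0:ℝ)) (𝓝 1) := by
            have : Tendsto (fun y : ℝ => Real.cos (t*y)) (𝓝 (0:ℝ)) (𝓝 (Real.cos (t*0))) :=
              (Real.continuous_cos.comp (continuous_const.mul continuous_id)).tendsto 0
            rw [mul_zero, Real.cos_zero] at this
            exact this.mono_left nhdsWithin_le_nhds
          have hmul := hcos.mul (hcomp.const_mul (1/t))
          rw [show (1:ℝ) * ((1/t) * 1) = 1/t by ring] at hmul
          refine hmul.congr fun y => ?_
          rw [Real.cot_eq_cos_div_sin]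
          field_simp
        have hg' : Tendsto (g t) (𝓝[>] (0:ℝ)) (𝓝 (1/4 - 1/t)) := by
          have hsq : Tendsto (fun y : ℝ => y^2) (𝓝[>] (0:ℝ)) (𝓝 0) := by
            have : Tendsto (fun y : ℝ => y^2) (𝓝 (0:ℝ)) (𝓝 ((0:ℝ)^2)) :=
              (continuous_pow 2).tendsto 0
            norm_num at this
            exact this.mono_left nhdsWithin_le_nhds
          have := (tendsto_const_nhds (x := (1/4:ℝ)) (f := (𝓝[>] (0:ℝ)))).sub hsq |>.sub hycot
          rw [sub_zero] at this
          exact this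
        refine hg'.congr' ?_
        filter_upwards [self_mem_nhdsWithin] with x hx
        rw [hG_def]; simp only [if_neg (ne_of_gt (mem_Ioi.mp hx))]
      have hmem : Icc (0:ℝ) yt ⊆ Ici 0 := Icc_subset_Ici_self
      unfold ContinuousWithinAt
      rw [hG0]
      refine Tendsto.mono_left ?_ (nhdsWithin_mono 0 hmem)
      rw [← Set.Ioi_insert, nhdsWithin_insert, tendsto_sup]
      exact ⟨hG0 ▸ tendsto_pure_nhds G 0, hL⟩
    · have hyIoc : y ∈ Ioc (0:ℝ) yt := ⟨lt_of_le_of_ne hy.1 (Ne.symm h), hy.2⟩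
      have hca : ContinuousAt (g t) y := (hderiv y hyIoc).continuousAt
      have hev : G =ᶠ[𝓝 y] g t := by
        filter_upwards [isOpen_ne.mem_nhds h] with z hz
        rw [hG_def]; simp only [if_neg hz]
      exact (hca.congr hev.symm).continuousWithinAt
  -- continuity of xPlus / xMinus on Icc
  have hsqrtG : ContinuousOn (fun y => Real.sqrt (G y)) (Icc 0 yt) :=
    Real.continuous_sqrt.comp_continuousOn hGcont
  have hxPcont : ContinuousOn (xPlus t) (Icc 0 yt) :=
    ((continuousOn_const (c := (-1/2:ℝ))).add hsqrtG).congr (fun y _ => by rw [xPlus, hvG]; rfl)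
  have hxMcont : ContinuousOn (xMinus t) (Icc 0 yt) :=
    ((continuousOn_const (c := (-1/2:ℝ))).sub hsqrtG).congr (fun y _ => by rw [xMinus, hvG]; rfl)
  -- endpoint values
  have hv0 : vMap t 0 = Real.sqrt (1/4 - 1/t) := by rw [hvG, hG0]
  have hvyt : vMap t yt = 0 := by rw [hvG, hGyt, Real.sqrt_zero]
  have hxP0 : xPlus t 0 = -1/2 + Real.sqrt (1/4 - 1/t) := by rw [xPlus, hv0]
  have hxPyt : xPlus t yt = -1/2 := by rw [xPlus, hvyt]; ring
  have hxM0 : xMinus t 0 = -1/2 - Real.sqrt (1/4 - 1/t) := by rw [xMinus, hv0]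
  have hxMyt : xMinus t yt = -1/2 := by rw [xMinus, hvyt]; ring
  -- monotonicity
  have hxPanti : StrictAntiOn (xPlus t) (Icc 0 yt) := by
    intro x hx y hy hxy
    have := hvanti hx hy hxy
    rw [xPlus, xPlus]
    linarith
  have hxMmono : StrictMonoOn (xMinus t) (Icc 0 yt) := by
    intro x hx y hy hxy
    have := hvanti hx hy hxy
    rw [xMinus, xMinus]
    linarith
  -- images
  have hytmem : yt ∈ Icc (0:ℝ) yt := ⟨le_of_lt hyt0, le_refl _⟩
  have h0mem : (0:ℝ) ∈ Icc (0:ℝ) yt := ⟨le_refl _, le_of_lt hyt0⟩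
  have himgP : xPlus t '' Ioo 0 yt = Ioo (-1/2 : ℝ) (-1/2 + Real.sqrt (1/4 - 1/t)) := by
    apply Subset.antisymm
    · rintro _ ⟨y, hy, rfl⟩
      have hymem : y ∈ Icc (0:ℝ) yt := ⟨le_of_lt hy.1, le_of_lt hy.2⟩
      constructor
      · have := hxPanti hymem hytmem hy.2
        rw [hxPyt] at this; linarith
      · have := hxPanti h0mem hymem hy.1
        rw [hxP0] at this; linarith
    · intro z hz
      have := intermediate_value_Ioo' (le_of_lt hyt0) hxPcont
      rw [hxPyt, hxP0] at this
      exact this hz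
  have himgM : xMinus t '' Ioo 0 yt = Ioo (-1/2 - Real.sqrt (1/4 - 1/t)) (-1/2 : ℝ) := by
    apply Subset.antisymm
    · rintro _ ⟨y, hy, rfl⟩
      have hymem : y ∈ Icc (0:ℝ) yt := ⟨le_of_lt hy.1, le_of_lt hy.2⟩
      constructor
      · have := hxMmono h0mem hymem hy.1
        rw [hxM0] at this; linarith
      · have := hxMmono hymem hytmem hy.2
        rw [hxMyt] at this; linarith
    · intro z hz
      have := intermediate_value_Ioo (le_of_lt hyt0) hxMcont
      rw [hxMyt, hxM0] at this
      exact this hz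
  exact ⟨hxPanti, himgP, hxMmono, himgM, hxPyt, hxMyt⟩
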